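/- If the ε(t) satisfy Assumption 1 and (Â_R, Â_I, β̂) minimizes Q_{p+1}(θ) = (1/N) Σ_{t=1}^N |ε(t) − A e^{i β t²}|² over θ = (A_R, A_I, β), with A = A_R + i A_I, then Â_R → 0 and Â_I → 0 almost surely as N → ∞. -/

import Mathlib

/-!
Comparing the minimiser with the zero-amplitude fit at the same frequency `β̂` gives
`N ‖Â‖² ≤ 2 Re (conj Â · T_N(β̂))`, where `T_N(β) = Σ_{t ≤ N} ε(t) e^{-iβt²}`, hence
`‖Â‖ ≤ 2 ‖T_N(β̂)‖ / N`. So it suffices that `T_N(β) / N → 0` almost surely, uniformly in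
`β ∈ [0, 2π]`. Truncating the noise at a level `c` splits `ε(t)` into a bounded centred part and
a tail of small mean modulus; the tail is controlled by the strong law of large numbers. For the
bounded part, Hoeffding's inequality bounds the probability of a large sum at each of `O(N²)`
grid frequencies by `e^{-qN}`, Borel–Cantelli makes the grid bound hold eventually, and since
`β ↦ T_N(β)` is `O(N³)`-Lipschitz a grid of mesh `O(N⁻²)` controls every `β`.
-/

open MeasureTheory ProbabilityTheory Filter Topology

noncomputable section

/-- **Assumption 1**: the noise variables `ε t` are i.i.d. complex-valued random variables,
whose real and imaginary parts are independent, each with mean `0` and variance `σ²/2`,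
and with finite fourth moment. -/
structure Assumption1 {Ω : Type*} [MeasurableSpace Ω] (μ : Measure Ω)
    (ε : ℕ → Ω → ℂ) (σ2 : ℝ) : Prop where
  measurable : ∀ t, Measurable (ε t)
  identDistrib : ∀ s t, IdentDistrib (ε s) (ε t) μ μ
  indep : iIndepFun ε μ
  indep_re_im : ∀ t, IndepFun (fun ω => (ε t ω).re) (fun ω => (ε t ω).im) μ
  mean_re : ∀ t, ∫ ω, (ε t ω).re ∂μ = 0
  mean_im : ∀ t, ∫ ω, (ε t ω).im ∂μ = 0
  var_re : ∀ t, variance (fun ω => (ε t ω).re) μ = σ2 / 2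
  var_im : ∀ t, variance (fun ω => (ε t ω).im) μ = σ2 / 2
  fourth_moment : ∀ t, Integrable (fun ω => ‖ε t ω‖ ^ 4) μ

/-- One elementary chirp component `A e^{i β t²}`. -/
def chirp (A : ℂ) (β : ℝ) (t : ℕ) : ℂ :=
  A * Complex.exp (Complex.I * (β : ℂ) * (t : ℂ) ^ 2)

/-- Residual sum of squares for the one-component model; `θ = (A_R, A_I, β)`. -/
def Q (y : ℕ → ℂ) (N : ℕ) (θ : ℝ × ℝ × ℝ) : ℝ :=
  ∑ t ∈ Finset.Icc 1 N,
    ‖y t - chirp (θ.1 + θ.2.1 * Complex.I) θ.2.2 t‖ ^ 2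

/-- The parameter space `Θ₁ = [-M, M] × [-M, M] × [0, 2π]`. -/
def Theta1 (M : ℝ) : Set (ℝ × ℝ × ℝ) :=
  Set.Icc (-M) M ×ˢ Set.Icc (-M) M ×ˢ Set.Icc 0 (2 * Real.pi)

open Finset Real
open scoped NNReal

def amplitude (θ : ℝ × ℝ × ℝ) : ℂ := θ.1 + θ.2.1 * Complex.I

def chirpPhase (β : ℝ) (t : ℕ) : ℂ := Complex.exp (Complex.I * ↑(-(β * t ^ 2)))

lemma norm_chirpPhase (β : ℝ) (t : ℕ) : ‖chirpPhase β t‖ = 1 :=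
  Complex.norm_exp_I_mul_ofReal _

lemma norm_chirpPhase_sub_le (β γ : ℝ) (t : ℕ) :
    ‖chirpPhase β t - chirpPhase γ t‖ ≤ |β - γ| * t ^ 2 := by
  have h : chirpPhase β t = chirpPhase γ t * Complex.exp (Complex.I * ↑(-((β - γ) * t ^ 2))) := by
    rw [chirpPhase, chirpPhase, ← Complex.exp_add]
    push_cast; ring_nf
  calc ‖chirpPhase β t - chirpPhase γ t‖
      = ‖Complex.exp (Complex.I * ↑(-((β - γ) * t ^ 2))) - 1‖ := by
        rw [h, ← mul_sub_one, norm_mul, norm_chirpPhase, one_mul]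
    _ ≤ ‖-((β - γ) * t ^ 2)‖ := Real.norm_exp_I_mul_ofReal_sub_one_le
    _ = |β - γ| * t ^ 2 := by rw [norm_neg, norm_mul, Real.norm_eq_abs, norm_pow,
        Real.norm_natCast]

lemma norm_sum_mul_chirpPhase_le (z : ℕ → ℂ) (N : ℕ) (β : ℝ) :
    ‖∑ t ∈ Icc 1 N, z t * chirpPhase β t‖ ≤ ∑ t ∈ Icc 1 N, ‖z t‖ :=
  (norm_sum_le _ _).trans_eq (sum_congr rfl fun t _ => by rw [norm_mul, norm_chirpPhase, mul_one])

lemma norm_sum_add_mul_chirpPhase_le (u v : ℕ → ℂ) (N : ℕ) (β : ℝ) :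
    ‖∑ t ∈ Icc 1 N, (u t + v t) * chirpPhase β t‖ ≤
      ‖∑ t ∈ Icc 1 N, u t * chirpPhase β t‖ + ∑ t ∈ Icc 1 N, ‖v t‖ := by
  simp_rw [add_mul, sum_add_distrib]
  exact (norm_add_le _ _).trans (add_le_add le_rfl (norm_sum_mul_chirpPhase_le v N β))

lemma norm_sum_mul_chirpPhase_sub_le {z : ℕ → ℂ} {B : ℝ} (hz : ∀ t, ‖z t‖ ≤ B) (N : ℕ)
    (β γ : ℝ) :
    ‖∑ t ∈ Icc 1 N, z t * chirpPhase β t - ∑ t ∈ Icc 1 N, z t * chirpPhase γ t‖ ≤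
      B * |β - γ| * N ^ 3 := by
  have hB : 0 ≤ B := (norm_nonneg _).trans (hz 0)
  have hterm : ∀ t ∈ Icc 1 N, ‖z t * chirpPhase β t - z t * chirpPhase γ t‖ ≤
      B * |β - γ| * N ^ 2 := by
    intro t ht
    have htN : (t : ℝ) ≤ N := by exact_mod_cast (mem_Icc.1 ht).2
    rw [← mul_sub, norm_mul, mul_assoc]
    gcongr
    · exact hz t
    · exact (norm_chirpPhase_sub_le β γ t).trans (by gcongr)
  rw [← sum_sub_distrib]
  refine (norm_sum_le _ _).trans ((sum_le_sum hterm).trans_eq ?_)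
  simp only [sum_const, Nat.card_Icc, add_tsub_cancel_right, nsmul_eq_mul]
  ring

lemma conj_chirp (A : ℂ) (β : ℝ) (t : ℕ) :
    starRingEnd ℂ (chirp A β t) = starRingEnd ℂ A * chirpPhase β t := by
  rw [chirp, chirpPhase, map_mul, ← Complex.exp_conj]
  congr 2
  simp only [map_mul, map_pow, Complex.conj_I, Complex.conj_ofReal, Complex.conj_natCast]
  push_cast; ring

lemma Q_eq_sum_norm_sq_add_sub (y : ℕ → ℂ) (N : ℕ) (θ : ℝ × ℝ × ℝ) :
    Q y N θ = ∑ t ∈ Icc 1 N, ‖y t‖ ^ 2 + N * ‖amplitude θ‖ ^ 2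
      - 2 * (starRingEnd ℂ (amplitude θ) * ∑ t ∈ Icc 1 N, y t * chirpPhase θ.2.2 t).re := by
  set A := amplitude θ
  have hterm : ∀ t, ‖y t - chirp A θ.2.2 t‖ ^ 2
      = ‖y t‖ ^ 2 + ‖A‖ ^ 2 - 2 * (starRingEnd ℂ A * (y t * chirpPhase θ.2.2 t)).re := by
    intro t
    have hnorm : ‖chirp A θ.2.2 t‖ = ‖A‖ := by
      rw [← Complex.norm_conj, conj_chirp, norm_mul, norm_chirpPhase, mul_one,
        Complex.norm_conj]
    rw [Complex.sq_norm, Complex.normSq_sub, ← Complex.sq_norm, ← Complex.sq_norm, hnorm,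
      conj_chirp]
    ring_nf
  change ∑ t ∈ Icc 1 N, ‖y t - chirp A θ.2.2 t‖ ^ 2 = _
  rw [sum_congr rfl fun t _ => hterm t, sum_sub_distrib, sum_add_distrib, mul_sum,
    Complex.re_sum, mul_sum]
  simp

lemma mul_norm_amplitude_le_of_Q_le (y : ℕ → ℂ) (N : ℕ) (θ : ℝ × ℝ × ℝ)
    (hθ : Q y N θ ≤ Q y N (0, 0, θ.2.2)) :
    N * ‖amplitude θ‖ ≤ 2 * ‖∑ t ∈ Icc 1 N, y t * chirpPhase θ.2.2 t‖ := by
  rw [Q_eq_sum_norm_sq_add_sub, Q_eq_sum_norm_sq_add_sub] at hθ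
  set A := amplitude θ
  set T := ∑ t ∈ Icc 1 N, y t * chirpPhase θ.2.2 t
  have hsq : N * ‖A‖ ^ 2 ≤ 2 * (starRingEnd ℂ A * T).re := by
    simp only [amplitude, Complex.ofReal_zero, zero_mul, add_zero, norm_zero, map_zero,
      Complex.zero_re] at hθ
    linarith
  have hre : (starRingEnd ℂ A * T).re ≤ ‖A‖ * ‖T‖ := by
    simpa only [norm_mul, Complex.norm_conj] using Complex.re_le_norm (starRingEnd ℂ A * T)
  rcases (norm_nonneg A).eq_or_lt with hA | hA
  · rw [← hA, mul_zero]; positivity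
  · nlinarith

lemma Q_le_Q_zero_of_isMinOn (y : ℕ → ℂ) {N : ℕ} (hN : 0 < N) {M : ℝ} {θ : ℝ × ℝ × ℝ}
    (hθ : θ ∈ Theta1 M) (hmin : IsMinOn (fun θ => (1 / (N : ℝ)) * Q y N θ) (Theta1 M) θ) :
    Q y N θ ≤ Q y N (0, 0, θ.2.2) := by
  obtain ⟨⟨hM₁, hM₂⟩, -, hβ⟩ := hθ
  have hzero : ((0 : ℝ), (0 : ℝ), θ.2.2) ∈ Theta1 M :=
    ⟨⟨by linarith, by linarith⟩, ⟨by linarith, by linarith⟩, hβ⟩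
  exact le_of_mul_le_mul_left (hmin hzero) (by positivity)

lemma exists_nat_le_abs_sub_mul_div_le {ℓ β : ℝ} (hℓ : 0 < ℓ) (hβ : β ∈ Set.Icc 0 ℓ) {K : ℕ}
    (hK : 0 < K) : ∃ j ≤ K, |β - ℓ * j / K| ≤ ℓ / K := by
  have hK' : (0 : ℝ) < K := by exact_mod_cast hK
  have hx : 0 ≤ β * K / ℓ := by have := hβ.1; positivity
  refine ⟨⌊β * K / ℓ⌋₊, Nat.floor_le_of_le ?_, ?_⟩
  · rw [div_le_iff₀ hℓ]; nlinarith [hβ.2]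
  · set j := ⌊β * K / ℓ⌋₊
    have h₁ : j * ℓ ≤ β * K := (le_div_iff₀ hℓ).1 (Nat.floor_le hx)
    have h₂ : β * K < (j + 1) * ℓ := (div_lt_iff₀ hℓ).1 (Nat.lt_floor_add_one _)
    have hsub : β - ℓ * j / K = (β * K - j * ℓ) / K := by field_simp
    rw [hsub, abs_div, abs_of_pos hK', div_le_div_iff_of_pos_right hK', abs_le]
    constructor <;> nlinarith

section Probability

variable {Ω : Type*} [MeasurableSpace Ω] {μ : Measure Ω}

lemma ae_eventually_notMem_of_summable_measureReal [IsFiniteMeasure μ] {s : ℕ → Set Ω}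
    (hs : Summable fun n => μ.real (s n)) : ∀ᵐ ω ∂μ, ∀ᶠ n in atTop, ω ∉ s n := by
  refine ae_eventually_notMem ?_
  rw [tsum_congr fun n => (ofReal_measureReal (s := s n)).symm,
    ← ENNReal.ofReal_tsum_of_nonneg (fun n => measureReal_nonneg) hs]
  exact ENNReal.ofReal_ne_top

lemma measureReal_abs_sum_ge_le {ι : Type*} {X : ι → Ω → ℝ} (h_indep : iIndepFun X μ)
    {c : ℝ≥0} {s : Finset ι} (h_subG : ∀ i ∈ s, HasSubgaussianMGF (X i) c μ) {a : ℝ}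
    (ha : 0 ≤ a) :
    μ.real {ω | a ≤ |∑ i ∈ s, X i ω|} ≤ 2 * exp (-a ^ 2 / (2 * #s * c)) := by
  have hsplit : {ω | a ≤ |∑ i ∈ s, X i ω|} =
      {ω | a ≤ ∑ i ∈ s, X i ω} ∪ {ω | a ≤ ∑ i ∈ s, (-X i) ω} := by
    ext ω; simp only [le_abs', Set.mem_union, Set.mem_ofPred_eq, Pi.neg_apply, sum_neg_distrib,
      le_neg]; tauto
  have hbound : ∀ Y : ι → Ω → ℝ, iIndepFun Y μ → (∀ i ∈ s, HasSubgaussianMGF (Y i) c μ) →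
      μ.real {ω | a ≤ ∑ i ∈ s, Y i ω} ≤ exp (-a ^ 2 / (2 * #s * c)) := fun Y hY hYc => by
    simpa [mul_assoc] using HasSubgaussianMGF.measure_sum_ge_le_of_iIndepFun hY hYc ha
  rw [hsplit, two_mul]
  exact (measureReal_union_le _ _).trans (add_le_add (hbound X h_indep h_subG)
    (hbound _ (h_indep.comp (fun _ => Neg.neg) fun _ => measurable_neg)
      fun i hi => (h_subG i hi).neg))

lemma measureReal_norm_sum_ge_le [IsProbabilityMeasure μ] {ι : Type*} {Z : ι → Ω → ℂ}
    (h_indep : iIndepFun Z μ) (h_meas : ∀ i, AEMeasurable (Z i) μ) {B : ℝ}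
    (h_bound : ∀ i, ∀ᵐ ω ∂μ, ‖Z i ω‖ ≤ B) (h_mean : ∀ i, μ[Z i] = 0) (s : Finset ι) {a : ℝ}
    (ha : 0 ≤ a) :
    μ.real {ω | a ≤ ‖∑ i ∈ s, Z i ω‖} ≤ 4 * exp (-a ^ 2 / (8 * #s * B ^ 2)) := by
  set c : ℝ≥0 := (‖B - -B‖₊ / 2) ^ 2
  have hc : (c : ℝ) = B ^ 2 := by
    simp only [c, NNReal.coe_pow, NNReal.coe_div, coe_nnnorm, NNReal.coe_ofNat,
      Real.norm_eq_abs]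
    rw [div_pow, sq_abs]; ring
  have hpart : ∀ f : ℂ →L[ℝ] ℝ, (∀ z, |f z| ≤ ‖z‖) →
      μ.real {ω | a / 2 ≤ |∑ i ∈ s, f (Z i ω)|} ≤ 2 * exp (-a ^ 2 / (8 * #s * B ^ 2)) := by
    intro f hf
    have h_subG : ∀ i ∈ s, HasSubgaussianMGF (fun ω => f (Z i ω)) c μ := fun i _ => by
      refine hasSubgaussianMGF_of_mem_Icc_of_integral_eq_zero
        (f.continuous.measurable.comp_aemeasurable (h_meas i))
        (by filter_upwards [h_bound i] with ω hω using abs_le.1 ((hf _).trans hω)) ?_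
      rw [f.integral_comp_comm (.of_bound (h_meas i).aestronglyMeasurable B (h_bound i)),
        h_mean i, map_zero]
    refine (measureReal_abs_sum_ge_le (h_indep.comp (fun _ => f) fun _ => f.continuous.measurable)
      h_subG (by positivity)).trans_eq ?_
    rw [hc]; congr 2; ring
  have hsplit : {ω | a ≤ ‖∑ i ∈ s, Z i ω‖} ⊆
      {ω | a / 2 ≤ |∑ i ∈ s, Complex.reCLM (Z i ω)|} ∪
        {ω | a / 2 ≤ |∑ i ∈ s, Complex.imCLM (Z i ω)|} := by
    intro ω hω
    have := hω.trans (Complex.norm_le_abs_re_add_abs_im (∑ i ∈ s, Z i ω))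
    simp only [Complex.re_sum, Complex.im_sum] at this
    simp only [Set.mem_union, Set.mem_ofPred_eq, Complex.reCLM_apply, Complex.imCLM_apply]
    by_contra! h
    linarith
  calc μ.real {ω | a ≤ ‖∑ i ∈ s, Z i ω‖}
      ≤ μ.real {ω | a / 2 ≤ |∑ i ∈ s, Complex.reCLM (Z i ω)|} +
          μ.real {ω | a / 2 ≤ |∑ i ∈ s, Complex.imCLM (Z i ω)|} :=
        (measureReal_mono hsplit).trans (measureReal_union_le _ _)
    _ ≤ 4 * exp (-a ^ 2 / (8 * #s * B ^ 2)) := by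
        linarith [hpart Complex.reCLM Complex.abs_re_le_norm,
          hpart Complex.imCLM Complex.abs_im_le_norm]

lemma ae_eventually_forall_mem_norm_sum_mul_chirpPhase_lt [IsProbabilityMeasure μ]
    {Z : ℕ → Ω → ℂ} (h_indep : iIndepFun Z μ) (h_meas : ∀ t, AEMeasurable (Z t) μ) {B : ℝ}
    (hB : 0 < B) (h_bound : ∀ t, ∀ᵐ ω ∂μ, ‖Z t ω‖ ≤ B) (h_mean : ∀ t, μ[Z t] = 0)
    {G : ℕ → Finset ℝ} {C : ℝ} (hG : ∀ N, (#(G N) : ℝ) ≤ C * (N ^ 2 + 1)) {δ : ℝ}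
    (hδ : 0 < δ) :
    ∀ᵐ ω ∂μ, ∀ᶠ N in atTop, ∀ γ ∈ G N, ‖∑ t ∈ Icc 1 N, Z t ω * chirpPhase γ t‖ < δ * N := by
  set r := exp (-δ ^ 2 / (8 * B ^ 2))
  have hr : ‖r‖ < 1 := by
    rw [Real.norm_of_nonneg (exp_nonneg _), exp_lt_one_iff, neg_div, neg_lt_zero]
    positivity
  have hexp : ∀ N : ℕ, exp (-(δ * N) ^ 2 / (8 * N * B ^ 2)) = r ^ N := fun N => by
    rw [← exp_nat_mul]
    rcases N.eq_zero_or_pos with rfl | hN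
    · simp
    · congr 1; field_simp
  set bad : ℕ → Set Ω := fun N =>
    ⋃ γ ∈ G N, {ω | δ * N ≤ ‖∑ t ∈ Icc 1 N, Z t ω * chirpPhase γ t‖}
  have hbad : ∀ N, μ.real (bad N) ≤ 4 * C * (N ^ 2 * r ^ N + r ^ N) := fun N => by
    have hγ : ∀ γ, μ.real {ω | δ * N ≤ ‖∑ t ∈ Icc 1 N, Z t ω * chirpPhase γ t‖} ≤ 4 * r ^ N :=
      fun γ => by
        have := measureReal_norm_sum_ge_le (μ := μ) (Z := fun t ω => Z t ω * chirpPhase γ t)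
          (h_indep.comp (fun t z => z * chirpPhase γ t) fun t => by fun_prop)
          (fun t => (h_meas t).mul_const _)
          (fun t => by filter_upwards [h_bound t] with ω hω; simpa [norm_chirpPhase] using hω)
          (fun t => by rw [integral_mul_const, h_mean t, zero_mul]) (Icc 1 N)
          (a := δ * N) (by positivity)
        simpa [hexp] using this
    calc μ.real (bad N) ≤ ∑ γ ∈ G N, 4 * r ^ N := (measureReal_biUnion_finset_le _ _).trans
          (sum_le_sum fun γ _ => hγ γ)
      _ ≤ C * (N ^ 2 + 1) * (4 * r ^ N) := by
          rw [sum_const, nsmul_eq_mul]; gcongr; exact hG N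
      _ = 4 * C * (N ^ 2 * r ^ N + r ^ N) := by ring
  have hsum : Summable fun N => μ.real (bad N) :=
    .of_nonneg_of_le (fun N => measureReal_nonneg) hbad
      (((summable_pow_mul_geometric_of_norm_lt_one 2 hr).add
        (summable_geometric_of_norm_lt_one hr)).mul_left _)
  filter_upwards [ae_eventually_notMem_of_summable_measureReal hsum] with ω hω
  filter_upwards [hω] with N hN γ hγ
  by_contra! h
  exact hN (Set.mem_biUnion hγ h)

lemma ae_eventually_forall_norm_sum_mul_chirpPhase_le_of_bounded [IsProbabilityMeasure μ]
    {Z : ℕ → Ω → ℂ} (h_indep : iIndepFun Z μ) (h_meas : ∀ t, AEMeasurable (Z t) μ) {B : ℝ}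
    (hB : 0 < B) (h_bound : ∀ t, ∀ᵐ ω ∂μ, ‖Z t ω‖ ≤ B) (h_mean : ∀ t, μ[Z t] = 0) {ℓ : ℝ}
    (hℓ : 0 < ℓ) {δ : ℝ} (hδ : 0 < δ) :
    ∀ᵐ ω ∂μ, ∀ᶠ N in atTop, ∀ β ∈ Set.Icc 0 ℓ,
      ‖∑ t ∈ Icc 1 N, Z t ω * chirpPhase β t‖ ≤ δ * N := by
  -- grid of mesh `ℓ / K N`, fine enough to beat the Lipschitz constant `B N ^ 3` of the sum
  set L := ⌈2 * ℓ * B / δ⌉₊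
  set K : ℕ → ℕ := fun N => L * N ^ 2 + 1
  set G : ℕ → Finset ℝ := fun N => (range (K N + 1)).image fun j : ℕ => ℓ * j / K N
  have hG : ∀ N, (#(G N) : ℝ) ≤ (L + 2) * (N ^ 2 + 1) := fun N => by
    refine (Nat.cast_le.2 card_image_le).trans ?_
    simp only [card_range, K]; push_cast; nlinarith [sq_nonneg (N : ℝ)]
  filter_upwards [ae_eventually_forall_mem_norm_sum_mul_chirpPhase_lt h_indep h_meas hB h_bound
    h_mean hG (half_pos hδ), ae_all_iff.2 h_bound] with ω hω hBω
  filter_upwards [hω] with N hN β hβ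
  have hK : (0 : ℝ) < K N := by positivity
  obtain ⟨j, hj, hβγ⟩ := exists_nat_le_abs_sub_mul_div_le hℓ hβ (K := K N) (by positivity)
  have hγ : ℓ * j / K N ∈ G N := mem_image.2 ⟨j, mem_range.2 (Nat.lt_succ_of_le hj), rfl⟩
  have hmesh : B * (ℓ / K N) * N ^ 3 ≤ δ / 2 * N := by
    have hL : 2 * ℓ * B / δ ≤ L := Nat.le_ceil _
    rw [div_le_iff₀ hδ] at hL
    rw [mul_div_assoc', div_mul_eq_mul_div, div_le_iff₀ hK]
    simp only [K]; push_cast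
    nlinarith [mul_le_mul_of_nonneg_right hL (pow_nonneg (N.cast_nonneg (α := ℝ)) 3),
      mul_nonneg hδ.le (N.cast_nonneg (α := ℝ))]
  calc ‖∑ t ∈ Icc 1 N, Z t ω * chirpPhase β t‖
      ≤ ‖∑ t ∈ Icc 1 N, Z t ω * chirpPhase (ℓ * j / K N) t‖ +
          ‖∑ t ∈ Icc 1 N, Z t ω * chirpPhase β t -
            ∑ t ∈ Icc 1 N, Z t ω * chirpPhase (ℓ * j / K N) t‖ := norm_le_norm_add_norm_sub' _ _
    _ ≤ δ / 2 * N + B * (ℓ / K N) * N ^ 3 := by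
        gcongr
        · exact (hN _ hγ).le
        · exact (norm_sum_mul_chirpPhase_sub_le hBω N _ _).trans (by gcongr)
    _ ≤ δ * N := by linarith

lemma exists_integral_norm_indicator_compl_closedBall_lt {ξ : Ω → ℂ} (h_int : Integrable ξ μ)
    {δ : ℝ} (hδ : 0 < δ) :
    ∃ c : ℝ, 0 < c ∧ ∫ ω, ‖(Metric.closedBall 0 c)ᶜ.indicator id (ξ ω)‖ ∂μ < δ := by
  have h_tendsto : Tendsto (fun n : ℕ => ∫ ω, ‖(Metric.closedBall 0 n)ᶜ.indicator id (ξ ω)‖ ∂μ)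
      atTop (𝓝 (∫ _, (0 : ℝ) ∂μ)) := by
    refine tendsto_integral_of_dominated_convergence (fun ω => ‖ξ ω‖)
      (fun n => (measurable_norm.comp (measurable_id.indicator
        Metric.isClosed_closedBall.measurableSet.compl)).comp_aemeasurable h_int.aemeasurable
          |>.aestronglyMeasurable) h_int.norm (fun n => ae_of_all _ fun ω => ?_)
      (ae_of_all _ fun ω => tendsto_atTop_of_eventually_const (i₀ := ⌈‖ξ ω‖⌉₊) fun n hn => ?_)
    · rw [norm_norm]
      exact norm_indicator_le_norm_self _ _
    · rw [Set.indicator_of_notMem (by simpa using (Nat.le_ceil _).trans (by exact_mod_cast hn)),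
        norm_zero]
  rw [integral_zero] at h_tendsto
  obtain ⟨n, hn, hpos⟩ := ((h_tendsto.eventually (gt_mem_nhds hδ)).and
    (eventually_gt_atTop 0)).exists
  exact ⟨n, by exact_mod_cast hpos, hn⟩

lemma ae_eventually_sum_Icc_le_mul {X : ℕ → Ω → ℝ} (h_int : Integrable (X 0) μ)
    (h_indep : Pairwise fun i j => IndepFun (X i) (X j) μ)
    (h_ident : ∀ t, IdentDistrib (X t) (X 0) μ μ) {δ : ℝ}
    (hδ : μ[X 0] < δ) : ∀ᵐ ω ∂μ, ∀ᶠ N in atTop, ∑ t ∈ Icc 1 N, X t ω ≤ δ * N := by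
  have h_ident' : ∀ k, IdentDistrib (X (k + 1)) (X (0 + 1)) μ μ := fun k =>
    (h_ident (k + 1)).trans (h_ident 1).symm
  filter_upwards [strong_law_ae_real (fun k => X (k + 1)) ((h_ident 1).integrable_iff.2 h_int)
    (fun i j hij => h_indep (by simpa using hij)) h_ident'] with ω hω
  rw [(h_ident 1).integral_eq] at hω
  filter_upwards [hω.eventually (gt_mem_nhds hδ), eventually_gt_atTop 0] with N hN hpos
  rw [range_eq_Ico, sum_Ico_add' (fun t => X t ω) 0 N 1] at hN
  exact ((div_lt_iff₀ (by exact_mod_cast hpos)).1 hN).le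

lemma ae_eventually_forall_norm_sum_comp_sub_integral_mul_chirpPhase_le
    [IsProbabilityMeasure μ] {E : Type*} [MeasurableSpace E] {ε : ℕ → Ω → E}
    (h_indep : iIndepFun ε μ) (h_ident : ∀ t, IdentDistrib (ε t) (ε 0) μ μ) {f : E → ℂ}
    (hf : Measurable f) {c : ℝ} (hc : 0 < c) (hfc : ∀ z, ‖f z‖ ≤ c) {ℓ : ℝ} (hℓ : 0 < ℓ)
    {δ : ℝ} (hδ : 0 < δ) :
    ∀ᵐ ω ∂μ, ∀ᶠ N in atTop, ∀ β ∈ Set.Icc 0 ℓ,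
      ‖∑ t ∈ Icc 1 N, (f (ε t ω) - μ[fun ω => f (ε 0 ω)]) * chirpPhase β t‖ ≤ δ * N := by
  set m := μ[fun ω => f (ε 0 ω)]
  refine ae_eventually_forall_norm_sum_mul_chirpPhase_le_of_bounded
    (Z := fun t ω => f (ε t ω) - m) (h_indep.comp _ fun _ => hf.sub_const m)
    (fun t => (hf.sub_const m).comp_aemeasurable (h_ident t).aemeasurable_fst) (B := c + ‖m‖)
    (by positivity) (fun t => ae_of_all _ fun ω => (norm_sub_le _ _).trans (by gcongr; exact hfc _))
    (fun t => ?_) hℓ hδ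
  have h_int : Integrable (fun ω => f (ε t ω)) μ :=
    .of_bound (hf.comp_aemeasurable (h_ident t).aemeasurable_fst).aestronglyMeasurable c
      (ae_of_all _ fun ω => hfc _)
  rw [integral_sub h_int (integrable_const m), integral_const, probReal_univ, one_smul,
    sub_eq_zero]
  exact ((h_ident t).comp hf).integral_eq

lemma norm_integral_indicator_le_integral_norm_indicator_compl {ξ : Ω → ℂ}
    (h_int : Integrable ξ μ) (h_mean : μ[ξ] = 0) {s : Set ℂ} (hs : MeasurableSet s) :
    ‖∫ ω, s.indicator id (ξ ω) ∂μ‖ ≤ ∫ ω, ‖sᶜ.indicator id (ξ ω)‖ ∂μ := by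
  have h_trunc : Integrable (fun ω => s.indicator id (ξ ω)) μ :=
    h_int.norm.mono' ((measurable_id.indicator hs).comp_aemeasurable h_int.aemeasurable
      |>.aestronglyMeasurable) (ae_of_all _ fun ω => norm_indicator_le_norm_self _ _)
  have h_compl : ∀ ω, sᶜ.indicator id (ξ ω) = ξ ω - s.indicator id (ξ ω) := fun ω => by
    rw [Set.indicator_compl]; rfl
  have : ∫ ω, s.indicator id (ξ ω) ∂μ = -∫ ω, sᶜ.indicator id (ξ ω) ∂μ := by
    simp_rw [h_compl]
    rw [integral_sub h_int h_trunc, h_mean, zero_sub, neg_neg]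
  rw [this, norm_neg]
  exact norm_integral_le_integral_norm _

lemma ae_eventually_forall_norm_sum_mul_chirpPhase_le [IsProbabilityMeasure μ]
    {ε : ℕ → Ω → ℂ} (h_indep : iIndepFun ε μ) (h_ident : ∀ t, IdentDistrib (ε t) (ε 0) μ μ)
    (h_int : Integrable (ε 0) μ) (h_mean : μ[ε 0] = 0) {ℓ : ℝ} (hℓ : 0 < ℓ) {δ : ℝ}
    (hδ : 0 < δ) :
    ∀ᵐ ω ∂μ, ∀ᶠ N in atTop, ∀ β ∈ Set.Icc 0 ℓ,
      ‖∑ t ∈ Icc 1 N, ε t ω * chirpPhase β t‖ ≤ δ * N := by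
  obtain ⟨c, hc, h_tail⟩ := exists_integral_norm_indicator_compl_closedBall_lt h_int
    (by positivity : 0 < δ / 4)
  set ball := Metric.closedBall (0 : ℂ) c
  have h_ball : MeasurableSet ball := Metric.isClosed_closedBall.measurableSet
  have h_le : ∀ z, ‖ball.indicator id z‖ ≤ c := fun z => by
    by_cases hz : z ∈ ball
    · simpa [Set.indicator_of_mem hz, ball] using hz
    · simpa [Set.indicator_of_notMem hz] using hc.le
  have h_tail_meas : Measurable fun z => ‖ballᶜ.indicator id z‖ :=
    measurable_norm.comp (measurable_id.indicator h_ball.compl)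
  set m := μ[fun ω => ball.indicator id (ε 0 ω)]
  have hm : ‖m‖ < δ / 4 :=
    (norm_integral_indicator_le_integral_norm_indicator_compl h_int h_mean h_ball).trans_lt h_tail
  have h_bdd := ae_eventually_forall_norm_sum_comp_sub_integral_mul_chirpPhase_le h_indep h_ident
    (measurable_id.indicator h_ball) hc h_le hℓ (half_pos hδ)
  have h_small := ae_eventually_sum_Icc_le_mul (X := fun t ω => ‖ballᶜ.indicator id (ε t ω)‖)
    (h_int.norm.mono' (h_tail_meas.comp_aemeasurable h_int.aemeasurable).aestronglyMeasurable
      (ae_of_all _ fun ω => (norm_norm _).trans_le (norm_indicator_le_norm_self _ _)))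
    (fun _ _ hij => (h_indep.comp _ fun _ => h_tail_meas).indepFun hij)
    (fun t => (h_ident t).comp h_tail_meas) h_tail
  filter_upwards [h_bdd, h_small] with ω h_bddω h_smallω
  filter_upwards [h_bddω, h_smallω] with N h_bddN h_smallN β hβ
  have h_split : ∀ z, z = (ball.indicator id z - m) + (ballᶜ.indicator id z + m) := fun z => by
    rw [Set.indicator_compl]; simp
  calc ‖∑ t ∈ Icc 1 N, ε t ω * chirpPhase β t‖
      ≤ ‖∑ t ∈ Icc 1 N, (ball.indicator id (ε t ω) - m) * chirpPhase β t‖ +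
          ∑ t ∈ Icc 1 N, ‖ballᶜ.indicator id (ε t ω) + m‖ := by
        simpa only [← h_split] using norm_sum_add_mul_chirpPhase_le
          (fun t => ball.indicator id (ε t ω) - m) (fun t => ballᶜ.indicator id (ε t ω) + m) N β
    _ ≤ δ / 2 * N + (∑ t ∈ Icc 1 N, ‖ballᶜ.indicator id (ε t ω)‖ + N * ‖m‖) := by
        grw [h_bddN β hβ, sum_le_sum fun t _ => norm_add_le _ _, sum_add_distrib, sum_const,
          Nat.card_Icc, add_tsub_cancel_right, nsmul_eq_mul]
    _ ≤ δ / 2 * N + (δ / 4 * N + δ / 4 * N) := by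
        nlinarith [mul_le_mul_of_nonneg_left hm.le (N.cast_nonneg (α := ℝ))]
    _ = δ * N := by ring

lemma ae_tendsto_norm_sum_mul_chirpPhase_div [IsProbabilityMeasure μ]
    {ε : ℕ → Ω → ℂ} (h_indep : iIndepFun ε μ) (h_ident : ∀ t, IdentDistrib (ε t) (ε 0) μ μ)
    (h_int : Integrable (ε 0) μ) (h_mean : μ[ε 0] = 0) {ℓ : ℝ} (hℓ : 0 < ℓ) :
    ∀ᵐ ω ∂μ, ∀ β : ℕ → ℝ, (∀ N, β N ∈ Set.Icc 0 ℓ) →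
      Tendsto (fun N => ‖∑ t ∈ Icc 1 N, ε t ω * chirpPhase (β N) t‖ / N) atTop (𝓝 0) := by
  filter_upwards [ae_all_iff.2 fun k : ℕ => ae_eventually_forall_norm_sum_mul_chirpPhase_le
    h_indep h_ident h_int h_mean hℓ (Nat.one_div_pos_of_nat (n := k))] with ω hω β hβ
  refine NormedAddGroup.tendsto_nhds_zero.2 fun r hr => ?_
  obtain ⟨k, hk⟩ := exists_nat_one_div_lt hr
  filter_upwards [hω k, eventually_gt_atTop 0] with N hN hpos
  rw [Real.norm_of_nonneg (by positivity), div_lt_iff₀ (by exact_mod_cast hpos)]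
  exact (hN _ (hβ N)).trans_lt (by gcongr)

end Probability

/-- **Lemma (statement 18).** If the `ε(t)` satisfy Assumption 1 and `(Â_R, Â_I, β̂)`
minimizes `Q_{p+1}(θ) = (1/N) Σ_{t=1}^N |ε(t) − A e^{i β t²}|²` over amplitudes
`A = A_R + i A_I ∈ [−M, M] + i [−M, M]` and frequency rates `β ∈ [0, 2π]`, then
`Â_R → 0` and `Â_I → 0` almost surely as `N → ∞`. -/
theorem lse_noise_fit_amplitudes_to_zero
    {Ω : Type*} [MeasurableSpace Ω] (μ : Measure Ω) [IsProbabilityMeasure μ]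
    (ε : ℕ → Ω → ℂ) (σ2 : ℝ)
    (hA1 : Assumption1 μ ε σ2)
    (M : ℝ)
    (θhat : ℕ → Ω → ℝ × ℝ × ℝ)
    (hmem : ∀ N ω, θhat N ω ∈ Theta1 M)
    (hmin : ∀ (N : ℕ) (ω : Ω), IsMinOn (fun θ => (1 / (N : ℝ)) * Q (fun t => ε t ω) N θ)
      (Theta1 M) (θhat N ω)) :
    ∀ᵐ ω ∂μ,
      Tendsto (fun N => (θhat N ω).1) atTop (𝓝 0) ∧
      Tendsto (fun N => (θhat N ω).2.1) atTop (𝓝 0) := by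
  have h_meas := (hA1.measurable 0).aestronglyMeasurable (μ := μ)
  have h_int : Integrable (ε 0) μ := (integrable_norm_iff h_meas).1 <| by
    simpa using integrable_norm_pow_of_le h_meas (p := 1) (by norm_num) (hA1.fourth_moment 0)
  have h_mean : μ[ε 0] = 0 := Complex.ext
    (by simpa [hA1.mean_re 0] using (integral_re h_int).symm)
    (by simpa [hA1.mean_im 0] using (integral_im h_int).symm)
  filter_upwards [ae_tendsto_norm_sum_mul_chirpPhase_div hA1.indep
    (fun t => hA1.identDistrib t 0) h_int h_mean Real.two_pi_pos] with ω hω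
  have hA : Tendsto (fun N => amplitude (θhat N ω)) atTop (𝓝 0) := by
    refine squeeze_zero_norm' ?_ (by simpa using (hω _ fun N => (hmem N ω).2.2).const_mul 2)
    filter_upwards [eventually_gt_atTop 0] with N hN
    have := mul_norm_amplitude_le_of_Q_le _ N _
      (Q_le_Q_zero_of_isMinOn _ hN (hmem N ω) (hmin N ω))
    rw [mul_div_assoc', le_div_iff₀ (by exact_mod_cast hN)]
    linarith
  exact ⟨by simpa [amplitude, Function.comp_def] using (Complex.continuous_re.tendsto 0).comp hA,
    by simpa [amplitude, Function.comp_def] using (Complex.continuous_im.tendsto 0).comp hA⟩
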